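/- arXiv:2205.04241 — 2 statements merged into one kernel-verified Lean document; each statement's English description precedes it below -/
import Mathlib

section
/- The set of nonzero complex numbers z satisfying z^{π+1} = 2 (principal power) is exactly { 2^{1/(π+1)} · exp(2πik/(π+1)) : k ∈ {−2, −1, 0, 1, 2} }, and it has exactly 5 elements. -/
open Complex Real

/-!
Writing `z = exp (log z)`, the equation `z ^ w = c` says `w · log z = log c + 2πik` for some
integer `k`, so `log z = (log c + 2πik) / w`; conversely such a `k` gives a solution exactly when
this value lies in the strip `-π < Im ≤ π`, where `log ∘ exp` is the identity. On that strip
`exp` is injective, so distinct admissible `k` give distinct solutions. For `c = 2` and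
`w = π + 1` the strip condition reads `-(π + 1) < 2k ≤ π + 1`, i.e. `k ∈ {-2, …, 2}`.
-/

namespace Complex

/-- The candidates for `log z` when `z ^ w = c`. -/
noncomputable def cpowRootLog (c w : ℂ) (k : ℤ) : ℂ := (log c + 2 * π * I * k) / w

section

variable {c w : ℂ}

theorem ne_zero_and_cpow_eq_iff (hw : w ≠ 0) (hc : c ≠ 0) {z : ℂ} :
    z ≠ 0 ∧ z ^ w = c ↔
      ∃ k : ℤ, (cpowRootLog c w k).im ∈ Set.Ioc (-π) π ∧ exp (cpowRootLog c w k) = z := by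
  constructor
  · rintro ⟨hz, hzc⟩
    rw [cpow_def_of_ne_zero hz, ← exp_log hc] at hzc
    obtain ⟨k, hk⟩ := exp_eq_exp_iff_exists_int.mp hzc
    have hlog : log z = cpowRootLog c w k := by
      rw [cpowRootLog, eq_div_iff hw, hk]
      ring
    exact ⟨k, hlog ▸ ⟨neg_pi_lt_log_im z, log_im_le_pi z⟩, hlog ▸ exp_log hz⟩
  · rintro ⟨k, ⟨hlo, hhi⟩, rfl⟩
    refine ⟨exp_ne_zero _, ?_⟩
    rw [cpow_def_of_ne_zero (exp_ne_zero _), log_exp hlo hhi, cpowRootLog, div_mul_cancel₀ _ hw,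
      exp_add, mul_comm _ (k : ℂ), exp_int_mul_two_pi_mul_I, mul_one, exp_log hc]

theorem injOn_exp_cpowRootLog (hw : w ≠ 0) :
    Set.InjOn (fun k : ℤ => exp (cpowRootLog c w k))
      {k | (cpowRootLog c w k).im ∈ Set.Ioc (-π) π} := by
  rintro k ⟨hklo, hkhi⟩ l ⟨hllo, hlhi⟩ hkl
  have h : cpowRootLog c w k = cpowRootLog c w l := by
    rw [← log_exp hklo hkhi, ← log_exp hllo hlhi]
    exact congrArg log hkl
  rwa [cpowRootLog, cpowRootLog, div_left_inj' hw, add_right_inj,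
    mul_right_inj' two_pi_I_ne_zero, Int.cast_inj] at h

theorem exp_cpowRootLog (hc : c ≠ 0) (k : ℤ) :
    exp (cpowRootLog c w k) = c ^ (1 / w) * exp (2 * π * I * k / w) := by
  rw [cpowRootLog, add_div, exp_add, cpow_def_of_ne_zero hc, mul_one_div]

end

theorem cpowRootLog_ofReal_im (c : ℂ) (r : ℝ) (k : ℤ) :
    (cpowRootLog c r k).im = (arg c + 2 * π * k) / r := by
  simp [cpowRootLog, log_im]

end Complex

theorem two_pi_mul_div_mem_Ioc_iff {r x : ℝ} (hr : 0 < r) :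
    2 * π * x / r ∈ Set.Ioc (-π) π ↔ -r < 2 * x ∧ 2 * x ≤ r := by
  rw [Set.mem_Ioc, lt_div_iff₀ hr, div_le_iff₀ hr]
  constructor <;> rintro ⟨h₁, h₂⟩ <;> constructor <;> nlinarith [pi_pos]

theorem neg_pi_add_one_lt_two_mul_and_le_iff (k : ℤ) :
    -(π + 1) < 2 * k ∧ 2 * (k : ℝ) ≤ π + 1 ↔ k ∈ ({-2, -1, 0, 1, 2} : Set ℤ) := by
  have h₃ := pi_gt_three
  have h₄ := pi_lt_four
  have hIcc : ({-2, -1, 0, 1, 2} : Set ℤ) = Set.Icc (-2) 2 := by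
    ext; simp only [Set.mem_insert_iff, Set.mem_singleton_iff, Set.mem_Icc]; omega
  rw [hIcc, Set.mem_Icc]
  constructor
  · rintro ⟨hlo, hhi⟩
    have hk₁ : (-3 : ℤ) < k := by exact_mod_cast (by linarith : (-3 : ℝ) < k)
    have hk₂ : k < 3 := by exact_mod_cast (by linarith : (k : ℝ) < 3)
    omega
  · rintro ⟨hlo, hhi⟩
    have : (-2 : ℝ) ≤ k := by exact_mod_cast hlo
    have : (k : ℝ) ≤ 2 := by exact_mod_cast hhi
    constructor <;> linarith

/-- The nonzero complex solutions of the principal-power equation `z ^ (π+1) = 2` are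
exactly `2^(1/(π+1)) · exp(2πik/(π+1))` for `k ∈ {-2, -1, 0, 1, 2}`, five values in all. -/
theorem roots_z_pow_pi_add_one_eq_two :
    {z : ℂ | z ≠ 0 ∧ z ^ ((Real.pi : ℂ) + 1) = 2} =
      (fun k : ℤ => (((2 : ℝ) ^ (1 / (Real.pi + 1)) : ℝ) : ℂ) *
        Complex.exp (2 * Real.pi * Complex.I * k / ((Real.pi : ℂ) + 1))) ''
        {-2, -1, 0, 1, 2} ∧
    {z : ℂ | z ≠ 0 ∧ z ^ ((Real.pi : ℂ) + 1) = 2}.ncard = 5 := by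
  have hr : (0 : ℝ) < π + 1 := by positivity
  have hw : ((π + 1 : ℝ) : ℂ) = (π : ℂ) + 1 := by push_cast; rfl
  have hadm : {k : ℤ | (cpowRootLog 2 ((π : ℂ) + 1) k).im ∈ Set.Ioc (-π) π} =
      {-2, -1, 0, 1, 2} := by
    ext k
    rw [Set.mem_ofPred_eq, ← hw, cpowRootLog_ofReal_im, ofNat_arg, zero_add,
      two_pi_mul_div_mem_Ioc_iff hr, neg_pi_add_one_lt_two_mul_and_le_iff]
  have hw0 : (π : ℂ) + 1 ≠ 0 := hw ▸ ofReal_ne_zero.mpr hr.ne'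
  have hset : {z : ℂ | z ≠ 0 ∧ z ^ ((π : ℂ) + 1) = 2} =
      (fun k : ℤ => exp (cpowRootLog 2 ((π : ℂ) + 1) k)) '' {-2, -1, 0, 1, 2} := by
    ext z
    rw [Set.mem_ofPred_eq, ne_zero_and_cpow_eq_iff hw0 two_ne_zero, ← hadm]
    rfl
  have hroot : (fun k : ℤ => exp (cpowRootLog 2 ((π : ℂ) + 1) k)) = fun k : ℤ =>
      (((2 : ℝ) ^ (1 / (π + 1)) : ℝ) : ℂ) * exp (2 * π * I * k / ((π : ℂ) + 1)) := by
    funext k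
    rw [exp_cpowRootLog two_ne_zero, ofReal_cpow zero_le_two, ← hw]
    push_cast
    rfl
  refine ⟨hset.trans (congrArg (· '' _) hroot), ?_⟩
  have hinj := injOn_exp_cpowRootLog (c := 2) hw0
  rw [hadm] at hinj
  rw [hset, hinj.ncard_image]
  rw [show ({-2, -1, 0, 1, 2} : Set ℤ) = ↑({-2, -1, 0, 1, 2} : Finset ℤ) by simp,
    Set.ncard_coe_finset]
  decide
end

section
/- The set of nonzero complex numbers z satisfying z^{π+1} = −2 (principal power) is exactly { 2^{1/(π+1)} · exp(iπ(2k+1)/(π+1)) : k ∈ {−2, −1, 0, 1} }, and it has exactly 4 elements. -/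
/-!
For `z ≠ 0` we have `z ^ w = exp (log z * w)`, so `z ^ w = c` exactly when
`log z = (log c + 2πik) / w` for some `k ∈ ℤ`. Since `log` maps onto the strip `-π < Im ≤ π`,
on which `exp` is injective, the solutions are in bijection with the `k` for which this
quotient lies in the strip. For `w = π + 1`, `c = -2` its imaginary part is
`π (2k + 1) / (π + 1)`, which lies in `(-π, π]` exactly for `-2 ≤ k ≤ 1` because `3 < π < 4`.
-/

open Complex Real

namespace Complex

noncomputable def logBranch (w c : ℂ) (k : ℤ) : ℂ := (log c + k * (2 * π * I)) / w

theorem injOn_exp_of_im_mem_Ioc : Set.InjOn exp {u : ℂ | u.im ∈ Set.Ioc (-π) π} := by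
  intro u hu v hv huv
  rw [← log_exp hu.1 hu.2, ← log_exp hv.1 hv.2, huv]

theorem logBranch_injective {w : ℂ} (hw : w ≠ 0) (c : ℂ) : Function.Injective (logBranch w c) := by
  intro k l hkl
  have h2pi : 2 * (π : ℂ) * I ≠ 0 := by simp [pi_ne_zero]
  simpa [logBranch, div_left_inj' hw, h2pi] using hkl

theorem setOf_cpow_eq {w c : ℂ} (hw : w ≠ 0) (hc : c ≠ 0) :
    {z : ℂ | z ≠ 0 ∧ z ^ w = c} =
      (exp ∘ logBranch w c) '' {k | (logBranch w c k).im ∈ Set.Ioc (-π) π} := by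
  ext z
  constructor
  · rintro ⟨hz, hzc⟩
    rw [cpow_def_of_ne_zero hz, ← exp_log hc, exp_eq_exp_iff_exists_int] at hzc
    obtain ⟨k, hk⟩ := hzc
    have hlog : log z = logBranch w c k := by rw [logBranch, ← hk, mul_div_cancel_right₀ _ hw]
    refine ⟨k, ?_, by simp [← hlog, exp_log hz]⟩
    show (logBranch w c k).im ∈ Set.Ioc (-π) π
    rw [← hlog]
    exact ⟨neg_pi_lt_log_im z, log_im_le_pi z⟩
  · rintro ⟨k, ⟨him_lo, him_hi⟩, rfl⟩
    refine ⟨exp_ne_zero _, ?_⟩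
    rw [Function.comp_apply, cpow_def_of_ne_zero (exp_ne_zero _), log_exp him_lo him_hi, logBranch,
      div_mul_cancel₀ _ hw, exp_add, exp_int_mul_two_pi_mul_I, mul_one, exp_log hc]

theorem injOn_exp_comp_logBranch {w : ℂ} (hw : w ≠ 0) (c : ℂ) :
    Set.InjOn (exp ∘ logBranch w c) {k | (logBranch w c k).im ∈ Set.Ioc (-π) π} :=
  injOn_exp_of_im_mem_Ioc.comp (logBranch_injective hw c).injOn fun _ hk => hk

theorem ncard_setOf_cpow_eq {w c : ℂ} (hw : w ≠ 0) (hc : c ≠ 0) :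
    {z : ℂ | z ≠ 0 ∧ z ^ w = c}.ncard = {k | (logBranch w c k).im ∈ Set.Ioc (-π) π}.ncard := by
  rw [setOf_cpow_eq hw hc, (injOn_exp_comp_logBranch hw c).ncard_image]

theorem im_logBranch_ofReal (p : ℝ) (c : ℂ) (k : ℤ) :
    (logBranch p c k).im = (arg c + 2 * π * k) / p := by
  simp only [logBranch, div_ofReal_im, add_im, log_im, mul_im, intCast_re, mul_re, re_ofNat,
    ofReal_re, im_ofNat, ofReal_im, mul_zero, sub_zero, I_im, mul_one, zero_mul, add_zero, I_re,
    intCast_im, sub_self]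
  ring

end Complex

theorem pi_add_one_ne_zero : (π : ℂ) + 1 ≠ 0 := by exact_mod_cast (by positivity : π + 1 ≠ 0)

theorem setOf_im_logBranch_pi_add_one_neg_two_mem_Ioc :
    {k : ℤ | (logBranch ((π : ℂ) + 1) (-2) k).im ∈ Set.Ioc (-π) π} = {-2, -1, 0, 1} := by
  have harg : arg (-2) = π := by exact_mod_cast arg_ofReal_of_neg (by norm_num : (-2 : ℝ) < 0)
  ext k
  have him := im_logBranch_ofReal (π + 1) (-2) k
  push_cast at him
  have hk : k ∈ ({-2, -1, 0, 1} : Set ℤ) ↔ -2 ≤ k ∧ k ≤ 1 := by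
    simp only [Set.mem_insert_iff, Set.mem_singleton_iff]
    omega
  rw [Set.mem_ofPred, him, harg, Set.mem_Ioc, lt_div_iff₀ (by positivity),
    div_le_iff₀ (by positivity), hk]
  have h3 := pi_gt_three
  have h4 := pi_lt_four
  constructor
  · rintro ⟨hlo, hhi⟩
    have hk_lo : (-3 : ℝ) < k := by nlinarith
    have hk_hi : (k : ℝ) < 2 := by nlinarith
    constructor
    · have : -3 < k := by exact_mod_cast hk_lo
      omega
    · have : k < 2 := by exact_mod_cast hk_hi
      omega
  · rintro ⟨hk_lo, hk_hi⟩
    have hk_lo' : (-2 : ℝ) ≤ k := by exact_mod_cast hk_lo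
    have hk_hi' : (k : ℝ) ≤ 1 := by exact_mod_cast hk_hi
    constructor <;> nlinarith

theorem exp_logBranch_pi_add_one_neg_two (k : ℤ) :
    exp (logBranch ((π : ℂ) + 1) (-2) k) =
      (((2 : ℝ) ^ (1 / (π + 1)) : ℝ) : ℂ) * exp (I * π * (2 * k + 1) / ((π : ℂ) + 1)) := by
  have hlog : Complex.log (-2) = Real.log 2 + π * I := by
    rw [show (-2 : ℂ) = ((2 : ℝ) : ℂ) * (-1) by push_cast; ring,
      log_ofReal_mul two_pos (by norm_num), log_neg_one]
  rw [Real.rpow_def_of_pos two_pos, ofReal_exp, ← Complex.exp_add, logBranch, hlog]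
  congr 1
  push_cast
  field_simp [pi_add_one_ne_zero]
  ring

/-- The nonzero complex solutions of the principal-power equation `z ^ (π+1) = -2` are
exactly `2^(1/(π+1)) · exp(iπ(2k+1)/(π+1))` for `k ∈ {-2, -1, 0, 1}`, four values in all. -/
theorem roots_z_pow_pi_add_one_eq_neg_two :
    {z : ℂ | z ≠ 0 ∧ z ^ ((Real.pi : ℂ) + 1) = -2} =
      (fun k : ℤ => (((2 : ℝ) ^ (1 / (Real.pi + 1)) : ℝ) : ℂ) *
        Complex.exp (Complex.I * Real.pi * (2 * k + 1) / ((Real.pi : ℂ) + 1))) ''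
        {-2, -1, 0, 1} ∧
    {z : ℂ | z ≠ 0 ∧ z ^ ((Real.pi : ℂ) + 1) = -2}.ncard = 4 := by
  have hc : (-2 : ℂ) ≠ 0 := by norm_num
  have hroots : (fun k : ℤ => (((2 : ℝ) ^ (1 / (Real.pi + 1)) : ℝ) : ℂ) *
      Complex.exp (Complex.I * Real.pi * (2 * k + 1) / ((Real.pi : ℂ) + 1))) =
      Complex.exp ∘ logBranch ((π : ℂ) + 1) (-2) :=
    funext fun k => (exp_logBranch_pi_add_one_neg_two k).symm
  constructor
  · rw [hroots, setOf_cpow_eq pi_add_one_ne_zero hc,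
      setOf_im_logBranch_pi_add_one_neg_two_mem_Ioc]
  · rw [ncard_setOf_cpow_eq pi_add_one_ne_zero hc, setOf_im_logBranch_pi_add_one_neg_two_mem_Ioc]
    norm_num [Set.ncard_insert_of_notMem, Set.ncard_singleton]
end
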